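/- Let K^+, K^- : D → ℝ, let J ∈ D, and let F be a finite subset of D(J). Define T_F f := Σ_{I∈F} [ K_I^+ · (∫_{I^-} f) · χ_{I^+} + K_I^- · (∫_{I^+} f) · χ_{I^-} ]. Then ⟨T_F h_J, h_J⟩ = (1/(4|J|)) Σ_{I∈F, I≠J} (K_I^+ + K_I^-) · |I|² − 1_{J∈F} · (1/4) (K_J^+ + K_J^-) · |J|, where ⟨·,·⟩ denotes the inner product in L²(ℝ, dx) and 1_{J∈F} equals 1 if J ∈ F and 0 otherwise. -/

import Mathlib

/-!
The `I`-th term of `⟨T_F h_J, h_J⟩` is `(K_I⁺ + K_I⁻) (∫_{I⁺} h_J) (∫_{I⁻} h_J)`.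
If `I ⊊ J`, dyadic nesting puts `I` inside one half of `J`, where `h_J` is the constant
`± |J|^{-1/2}`; both integrals then equal `± |I| / (2 √|J|)` with the same sign, and their
product is `|I|² / (4 |J|)`. For `I = J` they are `± √|J| / 2` with opposite signs, giving
`-|J| / 4`.
-/

open MeasureTheory Set

/-- The dyadic interval `[2^j k, 2^j (k+1))` indexed by `(j, k)`. -/
abbrev DI := ℤ × ℤ

noncomputable def DIset (I : DI) : Set ℝ :=
  Set.Ico ((2:ℝ)^I.1 * I.2) ((2:ℝ)^I.1 * (I.2 + 1))

noncomputable def DIlen (I : DI) : ℝ := (2:ℝ)^I.1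

/-- The left half `I⁺` of a dyadic interval. -/
def DIleft (I : DI) : DI := (I.1 - 1, 2 * I.2)

/-- The right half `I⁻` of a dyadic interval. -/
def DIright (I : DI) : DI := (I.1 - 1, 2 * I.2 + 1)

/-- `I ∈ D(J)`: `I` is a dyadic subinterval of `J`. -/
def DIsub (I J : DI) : Prop := DIset I ⊆ DIset J

/-- `m_I f`, the average of `f` over `I`. -/
noncomputable def avg (f : ℝ → ℝ) (I : DI) : ℝ := (DIlen I)⁻¹ * ∫ x in DIset I, f x

/-- The `L²`-normalized Haar function of `I`. -/
noncomputable def haar (I : DI) : ℝ → ℝ := fun x =>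
  (Real.sqrt (DIlen I))⁻¹ *
    ((DIset (DIleft I)).indicator (fun _ => (1:ℝ)) x
      - (DIset (DIright I)).indicator (fun _ => (1:ℝ)) x)

/-- `⟨f, h_I⟩`. -/
noncomputable def haarCoef (f : ℝ → ℝ) (I : DI) : ℝ := ∫ x, f x * haar I x

/-- A weight: measurable, a.e. positive, locally integrable. -/
def IsWeight (w : ℝ → ℝ) : Prop :=
  Measurable w ∧ (∀ᵐ x ∂(volume : Measure ℝ), 0 < w x) ∧ LocallyIntegrable w volume

/-- The measure `w dx`. -/
noncomputable def wMeasure (w : ℝ → ℝ) : Measure ℝ :=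
  volume.withDensity (fun x => ENNReal.ofReal (w x))

/-- `Δ_I f = m_{I⁺} f − m_{I⁻} f`. -/
noncomputable def deltaAvg (f : ℝ → ℝ) (I : DI) : ℝ := avg f (DIleft I) - avg f (DIright I)


/-- The `I`-th summand of a perfect dyadic operator:
`K_I⁺ (∫_{I⁻} f) χ_{I⁺} + K_I⁻ (∫_{I⁺} f) χ_{I⁻}`. -/
noncomputable def pdTerm (Kp Km : DI → ℝ) (f : ℝ → ℝ) (I : DI) (x : ℝ) : ℝ :=
  Kp I * (∫ y in DIset (DIright I), f y) * (DIset (DIleft I)).indicator (fun _ => (1:ℝ)) x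
  + Km I * (∫ y in DIset (DIleft I), f y) * (DIset (DIright I)).indicator (fun _ => (1:ℝ)) x

lemma DIlen_pos (I : DI) : 0 < DIlen I := zpow_pos two_pos _

lemma DIlen_left (I : DI) : DIlen (DIleft I) = DIlen I / 2 := by
  rw [DIlen, DIlen, DIleft, zpow_sub_one₀ two_ne_zero, div_eq_mul_inv]

lemma DIlen_right (I : DI) : DIlen (DIright I) = DIlen I / 2 := by
  rw [DIlen, DIlen, DIright, zpow_sub_one₀ two_ne_zero, div_eq_mul_inv]

lemma DIset_left (I : DI) :
    DIset (DIleft I) = Ico ((2 : ℝ) ^ I.1 * I.2) ((2 : ℝ) ^ I.1 * (I.2 + 1 / 2)) := by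
  rw [DIset, DIleft, zpow_sub_one₀ two_ne_zero]
  push_cast
  congr 1 <;> ring

lemma DIset_right (I : DI) :
    DIset (DIright I) = Ico ((2 : ℝ) ^ I.1 * (I.2 + 1 / 2)) ((2 : ℝ) ^ I.1 * (I.2 + 1)) := by
  rw [DIset, DIright, zpow_sub_one₀ two_ne_zero]
  push_cast
  congr 1 <;> ring

lemma disjoint_DIset_left_right (I : DI) : Disjoint (DIset (DIleft I)) (DIset (DIright I)) := by
  rw [DIset_left, DIset_right]
  exact Ico_disjoint_Ico_same

lemma DIsub_iff {I J : DI} : DIsub I J ↔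
    (2 : ℝ) ^ J.1 * J.2 ≤ 2 ^ I.1 * I.2 ∧
      (2 : ℝ) ^ I.1 * (I.2 + 1) ≤ 2 ^ J.1 * (J.2 + 1) :=
  Ico_subset_Ico_iff (by have := DIlen_pos I; rw [DIlen] at this; linarith)

lemma DIsub_left (I : DI) : DIsub (DIleft I) I := by
  rw [DIsub, DIset_left, DIset]
  exact Ico_subset_Ico le_rfl (by have := DIlen_pos I; rw [DIlen] at this; linarith)

lemma DIsub_right (I : DI) : DIsub (DIright I) I := by
  rw [DIsub, DIset_right, DIset]
  exact Ico_subset_Ico (by have := DIlen_pos I; rw [DIlen] at this; linarith) le_rfl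

lemma DIsub.le_fst {I J : DI} (h : DIsub I J) : I.1 ≤ J.1 := by
  obtain ⟨h₁, h₂⟩ := DIsub_iff.1 h
  rw [← zpow_le_zpow_iff_right₀ (one_lt_two : (1 : ℝ) < 2)]
  linarith

lemma DIsub_iff_of_le {i j : ℤ} (m k : ℤ) (hij : i ≤ j) :
    DIsub (i, m) (j, k) ↔ 2 ^ (j - i).toNat * k ≤ m ∧ m < 2 ^ (j - i).toNat * (k + 1) := by
  have hj : (2 : ℝ) ^ j = 2 ^ i * ((2 ^ (j - i).toNat : ℤ) : ℝ) := by
    rw [Int.cast_pow, Int.cast_ofNat, ← zpow_natCast, Int.toNat_of_nonneg (by omega),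
      ← zpow_add₀ two_ne_zero, add_sub_cancel]
  have hi : (0 : ℝ) < 2 ^ i := zpow_pos two_pos _
  rw [DIsub_iff, Int.lt_iff_add_one_le]
  simp only [hj, mul_assoc, mul_le_mul_iff_right₀ hi]
  norm_cast

lemma DIsub.eq_or_sub_left_or_sub_right {I J : DI} (h : DIsub I J) :
    I = J ∨ DIsub I (DIleft J) ∨ DIsub I (DIright J) := by
  obtain ⟨i, m⟩ := I
  obtain ⟨j, k⟩ := J
  have hij : i ≤ j := h.le_fst
  rw [DIsub_iff_of_le m k hij] at h
  obtain rfl | hlt := hij.eq_or_lt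
  · left
    simp only [sub_self, Int.toNat_zero, pow_zero, one_mul] at h
    simp only [Prod.mk.injEq, true_and]
    omega
  · right
    have hN : (j - i).toNat = (j - 1 - i).toNat + 1 := by omega
    simp only [DIleft, DIright, DIsub_iff_of_le m _ (by omega : i ≤ j - 1)]
    rw [hN, pow_succ] at h
    set P : ℤ := 2 ^ (j - 1 - i).toNat
    -- in units of `2 ^ i`, the midpoint of `J` is the integer `P * (2 * k + 1)`
    rcases lt_or_ge m (P * (2 * k + 1)) with hm | hm
    · left; constructor <;> linarith
    · right; constructor <;> linarith

lemma measurableSet_DIset (I : DI) : MeasurableSet (DIset I) := measurableSet_Ico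

lemma measureReal_DIset (I : DI) : volume.real (DIset I) = DIlen I := by
  have hlen : (2 : ℝ) ^ I.1 * (I.2 + 1) - 2 ^ I.1 * I.2 = DIlen I := by rw [DIlen]; ring
  rw [measureReal_def, DIset, Real.volume_Ico, hlen, ENNReal.toReal_ofReal (DIlen_pos I).le]

lemma integrable_haar (J : DI) : Integrable (haar J) := by
  have hind : ∀ I : DI, Integrable ((DIset I).indicator fun _ => (1 : ℝ)) :=
    fun I => (integrable_indicator_iff (measurableSet_DIset I)).2
      (integrableOn_const measure_Ico_lt_top.ne)
  exact ((hind _).sub (hind _)).const_mul _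

lemma setIntegral_haar_of_subset_left {J : DI} {A : Set ℝ} (hA : MeasurableSet A)
    (h : A ⊆ DIset (DIleft J)) : ∫ x in A, haar J x = volume.real A / √(DIlen J) := by
  have hconst : EqOn (haar J) (fun _ => (√(DIlen J))⁻¹) A := fun x hx => by
    have hx' : x ∉ DIset (DIright J) := (disjoint_DIset_left_right J).notMem_of_mem_left (h hx)
    simp [haar, h hx, hx']
  rw [setIntegral_congr_fun hA hconst, setIntegral_const, smul_eq_mul, div_eq_mul_inv]

lemma setIntegral_haar_of_subset_right {J : DI} {A : Set ℝ} (hA : MeasurableSet A)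
    (h : A ⊆ DIset (DIright J)) : ∫ x in A, haar J x = -(volume.real A / √(DIlen J)) := by
  have hconst : EqOn (haar J) (fun _ => -(√(DIlen J))⁻¹) A := fun x hx => by
    have hx' : x ∉ DIset (DIleft J) := (disjoint_DIset_left_right J).notMem_of_mem_right (h hx)
    simp [haar, h hx, hx']
  rw [setIntegral_congr_fun hA hconst, setIntegral_const, smul_eq_mul, div_eq_mul_inv, mul_neg]

lemma pdTerm_mul_eq (Kp Km : DI → ℝ) (f g : ℝ → ℝ) (I : DI) (x : ℝ) :
    pdTerm Kp Km f I x * g x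
      = Kp I * (∫ y in DIset (DIright I), f y) * (DIset (DIleft I)).indicator g x
        + Km I * (∫ y in DIset (DIleft I), f y) * (DIset (DIright I)).indicator g x := by
  simp only [pdTerm, indicator]
  split_ifs <;> ring

section PairingWithIntegrable

variable (Kp Km : DI → ℝ) (f : ℝ → ℝ) {g : ℝ → ℝ} {I : DI}

lemma integrable_indicator_of_DIsub {H : DI} (hg : IntegrableOn g (DIset I)) (hH : DIsub H I) :
    Integrable ((DIset H).indicator g) :=
  (integrable_indicator_iff (measurableSet_DIset H)).2 (hg.mono_set hH)

lemma integrable_pdTerm_mul (hg : IntegrableOn g (DIset I)) :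
    Integrable fun x => pdTerm Kp Km f I x * g x := by
  simp only [pdTerm_mul_eq]
  exact ((integrable_indicator_of_DIsub hg (DIsub_left I)).const_mul _).add
    ((integrable_indicator_of_DIsub hg (DIsub_right I)).const_mul _)

lemma integral_pdTerm_mul (hg : IntegrableOn g (DIset I)) :
    ∫ x, pdTerm Kp Km f I x * g x
      = Kp I * (∫ y in DIset (DIright I), f y) * (∫ x in DIset (DIleft I), g x)
        + Km I * (∫ y in DIset (DIleft I), f y) * (∫ x in DIset (DIright I), g x) := by
  simp only [pdTerm_mul_eq]
  rw [integral_add ((integrable_indicator_of_DIsub hg (DIsub_left I)).const_mul _)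
      ((integrable_indicator_of_DIsub hg (DIsub_right I)).const_mul _), integral_const_mul,
    integral_const_mul, integral_indicator (measurableSet_DIset _),
    integral_indicator (measurableSet_DIset _)]

end PairingWithIntegrable

lemma setIntegral_haar_left_mul_right_of_ne {I J : DI} (h : DIsub I J) (hne : I ≠ J) :
    (∫ x in DIset (DIleft I), haar J x) * (∫ x in DIset (DIright I), haar J x)
      = DIlen I ^ 2 / (4 * DIlen J) := by
  have hsqrt := Real.mul_self_sqrt (DIlen_pos J).le
  rcases h.eq_or_sub_left_or_sub_right with rfl | hJ | hJ
  · exact absurd rfl hne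
  · rw [setIntegral_haar_of_subset_left (measurableSet_DIset _) ((DIsub_left I).trans hJ),
      setIntegral_haar_of_subset_left (measurableSet_DIset _) ((DIsub_right I).trans hJ),
      div_mul_div_comm, hsqrt, measureReal_DIset, measureReal_DIset, DIlen_left, DIlen_right]
    ring
  · rw [setIntegral_haar_of_subset_right (measurableSet_DIset _) ((DIsub_left I).trans hJ),
      setIntegral_haar_of_subset_right (measurableSet_DIset _) ((DIsub_right I).trans hJ),
      neg_mul_neg, div_mul_div_comm, hsqrt, measureReal_DIset, measureReal_DIset, DIlen_left,
      DIlen_right]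
    ring

lemma setIntegral_haar_left_mul_right_self (J : DI) :
    (∫ x in DIset (DIleft J), haar J x) * (∫ x in DIset (DIright J), haar J x)
      = -(DIlen J / 4) := by
  rw [setIntegral_haar_of_subset_left (measurableSet_DIset _) subset_rfl,
    setIntegral_haar_of_subset_right (measurableSet_DIset _) subset_rfl, mul_neg,
    div_mul_div_comm, Real.mul_self_sqrt (DIlen_pos J).le, measureReal_DIset, measureReal_DIset,
    DIlen_left, DIlen_right]
  field_simp [(DIlen_pos J).ne']
  ring

/-- computation of the testing pairing `⟨T_F h_J, h_J⟩`. -/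
theorem testing_pairing (Kp Km : DI → ℝ) (J : DI) (F : Finset DI)
    (hF : ∀ I ∈ F, DIsub I J) :
    ∫ x, (∑ I ∈ F, pdTerm Kp Km (haar J) I x) * haar J x
      = (1 / (4 * DIlen J)) * ∑ I ∈ F.erase J, (Kp I + Km I) * (DIlen I)^2
        - (if J ∈ F then (1:ℝ) else 0) * (1/4) * (Kp J + Km J) * DIlen J := by
  have hterm : ∀ I, ∫ x, pdTerm Kp Km (haar J) I x * haar J x
      = (Kp I + Km I)
        * ((∫ x in DIset (DIleft I), haar J x) * ∫ x in DIset (DIright I), haar J x) :=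
    fun I => by rw [integral_pdTerm_mul _ _ _ (integrable_haar J).integrableOn]; ring
  have hoff : ∀ I ∈ F.erase J, ∫ x, pdTerm Kp Km (haar J) I x * haar J x
      = 1 / (4 * DIlen J) * ((Kp I + Km I) * DIlen I ^ 2) := fun I hI => by
    rw [hterm, setIntegral_haar_left_mul_right_of_ne (hF I (Finset.mem_of_mem_erase hI))
      (Finset.ne_of_mem_erase hI)]
    ring
  simp_rw [Finset.sum_mul]
  rw [integral_finsetSum F fun I _ => integrable_pdTerm_mul _ _ _ (integrable_haar J).integrableOn,
    Finset.mul_sum]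
  by_cases hJ : J ∈ F
  · rw [← Finset.add_sum_erase F _ hJ, Finset.sum_congr rfl hoff, hterm,
      setIntegral_haar_left_mul_right_self, if_pos hJ]
    ring
  · rw [Finset.erase_eq_of_notMem hJ] at hoff ⊢
    rw [Finset.sum_congr rfl hoff, if_neg hJ]
    ring
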